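/- arXiv:1201.0011 — 6 statements merged into one kernel-verified Lean document; each statement's English description precedes it below -/
import Mathlib

section
/- Variational characterization of trace distance: Let ρ and σ be Hermitian complex square matrices over the same finite index type with Tr[ρ] = Tr[σ]. Then ‖ρ − σ‖₁ = 2 · max { Tr[M(ρ − σ)] : M Hermitian with 0 ≤ M ≤ I }; that is, 2·Tr[M(ρ−σ)] ≤ ‖ρ−σ‖₁ for every matrix M with 0 ≤ M ≤ I, and there exists such an M attaining equality. -/
open scoped Matrix ComplexOrder

/-- The trace norm `‖A‖₁ = Tr[√(AᴴA)]` of a complex square matrix. -/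
noncomputable def traceNorm {d : Type*} [Fintype d] [DecidableEq d]
    (A : Matrix d d ℂ) : ℝ :=
  (((Matrix.posSemidef_conjTranspose_mul_self A).1.eigenvectorUnitary : Matrix d d ℂ) *
      Matrix.diagonal ((fun x : ℝ => (x : ℂ)) ∘ Real.sqrt ∘ (Matrix.posSemidef_conjTranspose_mul_self A).1.eigenvalues) *
      (star ((Matrix.posSemidef_conjTranspose_mul_self A).1.eigenvectorUnitary : Matrix d d ℂ))).trace.re

/-!
Write `Δ = ρ - σ = Δ⁺ - Δ⁻` with `Δ⁺, Δ⁻ ≥ 0`. Then `‖Δ‖₁ = Tr Δ⁺ + Tr Δ⁻`, and `Tr Δ = 0` makes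
this `2 Tr Δ⁺`. For `0 ≤ M ≤ 1` positivity of traces of products of positive matrices gives
`Tr[MΔ] ≤ Tr[MΔ⁺] ≤ Tr Δ⁺`, and the spectral projection of `Δ` onto `(0, ∞)` attains the bound.
-/

open Matrix
open scoped MatrixOrder

section

variable {d : Type*} [Fintype d] [DecidableEq d]

theorem traceNorm_eq_re_trace_abs (A : Matrix d d ℂ) : traceNorm A = (CFC.abs A).trace.re := by
  rw [CFC.abs, star_eq_conjTranspose,
    CFC.sqrt_eq_real_sqrt _ (posSemidef_conjTranspose_mul_self A).nonneg, cfcₙ_eq_cfc,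
    (posSemidef_conjTranspose_mul_self A).1.cfc_eq]
  rfl

theorem traceNorm_eq_two_mul_re_trace_posPart {Δ : Matrix d d ℂ} (hΔ : Δ.IsHermitian)
    (htr : Δ.trace = 0) : traceNorm Δ = 2 * (Δ⁺).trace.re := by
  have h := congrArg (fun X : Matrix d d ℂ => X.trace.re) (CFC.abs_add_self Δ hΔ.isSelfAdjoint)
  simp only [trace_add, htr, add_zero, trace_smul] at h
  rw [traceNorm_eq_re_trace_abs, h]
  simp

theorem Matrix.PosSemidef.trace_mul_nonneg {𝕜 : Type*} [RCLike 𝕜] {A B : Matrix d d 𝕜}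
    (hA : A.PosSemidef) (hB : B.PosSemidef) : 0 ≤ (A * B).trace := by
  obtain ⟨C, rfl⟩ := CStarAlgebra.nonneg_iff_eq_star_mul_self.mp hB.nonneg
  rw [← mul_assoc, trace_mul_cycle, star_eq_conjTranspose]
  exact (hA.mul_mul_conjTranspose_same C).trace_nonneg

theorem trace_mul_le_trace_posPart {M Δ : Matrix d d ℂ} (hM₀ : M.PosSemidef)
    (hM₁ : (1 - M).PosSemidef) (hΔ : Δ.IsHermitian) : (M * Δ).trace ≤ (Δ⁺).trace := by
  have hpos := hM₁.trace_mul_nonneg (CFC.posPart_nonneg Δ).posSemidef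
  have hneg := hM₀.trace_mul_nonneg (CFC.negPart_nonneg Δ).posSemidef
  rw [sub_mul, one_mul, trace_sub, sub_nonneg] at hpos
  calc (M * Δ).trace = (M * Δ⁺).trace - (M * Δ⁻).trace := by
        rw [← trace_sub, ← mul_sub, CFC.posPart_sub_negPart Δ hΔ.isSelfAdjoint]
    _ ≤ (M * Δ⁺).trace := sub_le_self _ hneg
    _ ≤ (Δ⁺).trace := hpos

noncomputable def positiveSpectralProjection (Δ : Matrix d d ℂ) : Matrix d d ℂ :=
  cfc ((Set.Ioi (0 : ℝ)).indicator 1) Δ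

theorem positiveSpectralProjection_isHermitian (Δ : Matrix d d ℂ) :
    (positiveSpectralProjection Δ).IsHermitian :=
  cfc_predicate _ Δ

theorem positiveSpectralProjection_posSemidef (Δ : Matrix d d ℂ) :
    (positiveSpectralProjection Δ).PosSemidef :=
  (cfc_nonneg fun x _ => Set.indicator_nonneg (fun _ _ => zero_le_one) x).posSemidef

theorem one_sub_positiveSpectralProjection_posSemidef (Δ : Matrix d d ℂ) :
    (1 - positiveSpectralProjection Δ).PosSemidef :=
  (sub_nonneg.mpr <|
    cfc_le_one _ Δ fun x _ => Set.indicator_le_self' (fun _ _ => zero_le_one) x).posSemidef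

theorem positiveSpectralProjection_mul_self {Δ : Matrix d d ℂ} (hΔ : Δ.IsHermitian) :
    positiveSpectralProjection Δ * Δ = Δ⁺ := by
  -- the indicator is discontinuous, but the spectrum of a matrix is finite
  have hcont : ∀ f : ℝ → ℝ, ContinuousOn f (spectrum ℝ Δ) := Δ.finite_real_spectrum.continuousOn
  nth_rw 2 [← cfc_id' ℝ Δ hΔ.isSelfAdjoint]
  rw [positiveSpectralProjection, ← cfc_mul _ _ Δ (hcont _) (hcont _), CFC.posPart_def,
    cfcₙ_eq_cfc]
  refine cfc_congr fun x _ => ?_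
  by_cases hx : 0 < x <;> simp [hx, le_of_lt, not_lt.mp]

end

/-- Variational characterization of the trace distance: for Hermitian `ρ`, `σ` of equal trace,
`‖ρ − σ‖₁ = 2 · max { Tr[M(ρ − σ)] : 0 ≤ M ≤ I }`. -/
theorem trace_distance_variational {d : Type*} [Fintype d] [DecidableEq d]
    (ρ σ : Matrix d d ℂ) (hρ : ρ.IsHermitian) (hσ : σ.IsHermitian)
    (htr : ρ.trace = σ.trace) :
    (∀ M : Matrix d d ℂ, M.PosSemidef → ((1 : Matrix d d ℂ) - M).PosSemidef →
        2 * ((M * (ρ - σ)).trace).re ≤ traceNorm (ρ - σ)) ∧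
    (∃ M : Matrix d d ℂ, M.IsHermitian ∧ M.PosSemidef ∧ ((1 : Matrix d d ℂ) - M).PosSemidef ∧
        2 * ((M * (ρ - σ)).trace).re = traceNorm (ρ - σ)) := by
  have hΔ : (ρ - σ).IsHermitian := hρ.sub hσ
  have hnorm := traceNorm_eq_two_mul_re_trace_posPart hΔ (by rw [trace_sub, htr, sub_self])
  refine ⟨fun M hM₀ hM₁ => ?_, positiveSpectralProjection (ρ - σ),
    positiveSpectralProjection_isHermitian _, positiveSpectralProjection_posSemidef _,
    one_sub_positiveSpectralProjection_posSemidef _, ?_⟩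
  · have hle := (Complex.le_def.mp (trace_mul_le_trace_posPart hM₀ hM₁ hΔ)).1
    linarith
  · rw [positiveSpectralProjection_mul_self hΔ, hnorm]
end

section
/- Hayashi–Nagaoka operator inequality (Lemma 2): Let S and T be complex square matrices over the same finite index type with T positive semidefinite and 0 ≤ S ≤ I, and suppose that S + T is positive definite. Then I − (S+T)^{−1/2} S (S+T)^{−1/2} ≤ 2(I − S) + 4T, where (S+T)^{−1/2} denotes the inverse of the positive definite square root of S + T. -/
/-!
Write `m = √(S+T)` and `n = m⁻¹`. Using only `m * m = S + T` and `n * m = m * n = 1`, one checks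
`2(1 - S) + 4T - (1 - nSn) = 4(m - S) + 2(n - 1)S(n - 1) + (n - 2)T(n - 2)`.
The last two terms are conjugates of positive operators by self-adjoint ones, so everything
reduces to `S ≤ √(S+T)`; this follows from `S² ≤ S ≤ S + T` because the square root is operator
monotone.
-/

open scoped Matrix ComplexOrder

/-- The square root of a positive semidefinite matrix, as defined in Mathlib (Dec 2024)
under the name `Matrix.PosSemidef.sqrt` (removed since). -/
noncomputable def Matrix.PosSemidef.sqrt {n 𝕜 : Type*} [Fintype n] [RCLike 𝕜] [DecidableEq n]
    {A : Matrix n n 𝕜} (hA : A.PosSemidef) : Matrix n n 𝕜 :=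
  hA.1.eigenvectorUnitary.1 * Matrix.diagonal ((↑) ∘ (√·) ∘ hA.1.eigenvalues) *
    (star hA.1.eigenvectorUnitary : Matrix n n 𝕜)

theorem hayashi_nagaoka_of_le_sqrt {R : Type*} [Ring R] [PartialOrder R] [StarRing R]
    [StarOrderedRing R] {m n s t : R} (hm : m * m = s + t) (hmn : m * n = 1) (hnm : n * m = 1)
    (hn : IsSelfAdjoint n) (hs : 0 ≤ s) (hsm : s ≤ m) (ht : 0 ≤ t) :
    1 - n * s * n ≤ 2 * (1 - s) + 4 * t := by
  have hleft : n * (s + t) = m := by rw [← hm, ← mul_assoc, hnm, one_mul]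
  have hright : (s + t) * n = m := by rw [← hm, mul_assoc, hmn, mul_one]
  have hconj : n * (s + t) * n = 1 := by rw [hleft, hmn]
  have hsum : 2 * (1 - s) + 4 * t - (1 - n * s * n) =
      4 * (m - s) + 2 * ((n - 1) * s * (n - 1)) + (n - 2) * t * (n - 2) :=
    calc _ = 2 * (1 - s) + 4 * t - (1 - n * s * n) + (n * (s + t) * n - 1)
          - 2 * (n * (s + t) - m) - 2 * ((s + t) * n - m) := by
            rw [hconj, hleft, hright]; simp
      _ = _ := by noncomm_ring
  rw [← sub_nonneg, hsum]
  refine add_nonneg (add_nonneg ?_ ?_) ?_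
  · simpa using nsmul_nonneg (sub_nonneg.mpr hsm) 4
  · simpa using nsmul_nonneg ((hn.sub (.one R)).conjugate_nonneg hs) 2
  · exact (hn.sub (.ofNat 2)).conjugate_nonneg ht

namespace CStarAlgebra

variable {A : Type*} [CStarAlgebra A] [PartialOrder A] [StarOrderedRing A]

theorem le_sqrt_add {s t : A} (hs0 : 0 ≤ s) (hs1 : s ≤ 1) (ht : 0 ≤ t) :
    s ≤ CFC.sqrt (s + t) :=
  calc s = CFC.sqrt (s ^ 2) := (CFC.sqrt_sq s).symm
    _ ≤ CFC.sqrt (s + t) := CFC.sqrt_le_sqrt _ _ <| calc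
        s ^ 2 ≤ s ^ 1 := pow_antitone hs0 hs1 one_le_two
        _ = s := pow_one s
        _ ≤ s + t := le_add_of_nonneg_right ht

theorem hayashi_nagaoka {s t : A} (hs0 : 0 ≤ s) (hs1 : s ≤ 1) (ht : 0 ≤ t)
    (hst : IsUnit (s + t)) :
    1 - Ring.inverse (CFC.sqrt (s + t)) * s * Ring.inverse (CFC.sqrt (s + t)) ≤
      2 * (1 - s) + 4 * t := by
  have hm : IsUnit (CFC.sqrt (s + t)) := (CFC.isUnit_sqrt_iff _ (add_nonneg hs0 ht)).mpr hst
  exact hayashi_nagaoka_of_le_sqrt (CFC.sqrt_mul_sqrt_self _ (add_nonneg hs0 ht))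
    (Ring.mul_inverse_cancel _ hm) (Ring.inverse_mul_cancel _ hm)
    (CFC.sqrt_nonneg _).isSelfAdjoint.ringInverse hs0 (le_sqrt_add hs0 hs1 ht) ht

end CStarAlgebra

open scoped MatrixOrder in
theorem Matrix.PosSemidef.sqrt_eq_cfcSqrt {n 𝕜 : Type*} [Fintype n] [RCLike 𝕜] [DecidableEq n]
    {A : Matrix n n 𝕜} (hA : A.PosSemidef) : hA.sqrt = CFC.sqrt A := by
  rw [CFC.sqrt_eq_real_sqrt A hA.nonneg, cfcₙ_eq_cfc, hA.isHermitian.cfc_eq]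
  rfl

/-- Hayashi–Nagaoka operator inequality: if `0 ≤ T`, `0 ≤ S ≤ I` and `S + T` is positive
definite, then `I − (S+T)^{−1/2} S (S+T)^{−1/2} ≤ 2(I − S) + 4T`, where `(S+T)^{−1/2}` is the
inverse of the positive semidefinite square root of `S + T`. -/
theorem hayashi_nagaoka {d : Type*} [Fintype d] [DecidableEq d]
    (S T : Matrix d d ℂ) (hT : T.PosSemidef)
    (hS : S.PosSemidef) (hSI : ((1 : Matrix d d ℂ) - S).PosSemidef)
    (hST : (S + T).PosDef) :
    ((2 : ℂ) • ((1 : Matrix d d ℂ) - S) + (4 : ℂ) • T -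
      ((1 : Matrix d d ℂ) -
        (hST.posSemidef.sqrt)⁻¹ * S * (hST.posSemidef.sqrt)⁻¹)).PosSemidef := by
  simp only [hST.posSemidef.sqrt_eq_cfcSqrt, Matrix.nonsing_inv_eq_ringInverse,
    ofNat_smul_eq_nsmul, nsmul_eq_mul, Nat.cast_ofNat]
  -- Under `MatrixOrder`, `A ≤ B` unfolds to `(B - A).PosSemidef`, so `hSI` and the goal are
  -- already order statements in the C⋆-algebra of matrices with the L2 operator norm.
  open scoped MatrixOrder Matrix.Norms.L2Operator in
  exact CStarAlgebra.hayashi_nagaoka hS.nonneg hSI hT.nonneg hST.isUnit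
end

section
/- Operator union bound for tensor products (Lemma 3): Let P be a complex square matrix over a finite index type A with 0 ≤ P ≤ I^A, and Q a complex square matrix over a finite index type B with 0 ≤ Q ≤ I^B. Then I^{AB} − P ⊗ Q ≤ (I^A − P) ⊗ I^B + I^A ⊗ (I^B − Q), where ⊗ denotes the Kronecker product and I^{AB} = I^A ⊗ I^B. -/
open scoped Matrix ComplexOrder Kronecker

namespace Matrix

section Sub

variable {α l m n p : Type*} [NonUnitalNonAssocRing α]

theorem sub_kronecker (A₁ A₂ : Matrix l m α) (B : Matrix n p α) :
    (A₁ - A₂) ⊗ₖ B = A₁ ⊗ₖ B - A₂ ⊗ₖ B := by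
  ext; simp only [kroneckerMap_apply, sub_apply, sub_mul]

theorem kronecker_sub (A : Matrix l m α) (B₁ B₂ : Matrix n p α) :
    A ⊗ₖ (B₁ - B₂) = A ⊗ₖ B₁ - A ⊗ₖ B₂ := by
  ext; simp only [kroneckerMap_apply, sub_apply, mul_sub]

end Sub

theorem one_sub_kronecker_one_sub {R A B : Type*} [Ring R] [DecidableEq A] [DecidableEq B]
    (P : Matrix A A R) (Q : Matrix B B R) :
    (1 - P) ⊗ₖ (1 - Q) =
      ((1 - P) ⊗ₖ (1 : Matrix B B R) + (1 : Matrix A A R) ⊗ₖ (1 - Q)) - (1 - P ⊗ₖ Q) := by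
  simp only [sub_kronecker, kronecker_sub, one_kronecker_one]
  abel

end Matrix

theorem operator_union_bound_general {A B : Type*} [Fintype A] [DecidableEq A]
    [Fintype B] [DecidableEq B]
    (P : Matrix A A ℂ) (Q : Matrix B B ℂ)
    (hPI : ((1 : Matrix A A ℂ) - P).PosSemidef)
    (hQI : ((1 : Matrix B B ℂ) - Q).PosSemidef) :
    ((((1 : Matrix A A ℂ) - P) ⊗ₖ (1 : Matrix B B ℂ) +
        (1 : Matrix A A ℂ) ⊗ₖ ((1 : Matrix B B ℂ) - Q)) -
      ((1 : Matrix (A × B) (A × B) ℂ) - P ⊗ₖ Q)).PosSemidef := by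
  rw [← Matrix.one_sub_kronecker_one_sub]
  exact hPI.kronecker hQI

/-- Operator union bound for tensor products: if `0 ≤ P ≤ I^A` and `0 ≤ Q ≤ I^B`, then
`I^{AB} − P ⊗ Q ≤ (I^A − P) ⊗ I^B + I^A ⊗ (I^B − Q)`. -/
theorem operator_union_bound {A B : Type*} [Fintype A] [DecidableEq A]
    [Fintype B] [DecidableEq B]
    (P : Matrix A A ℂ) (Q : Matrix B B ℂ)
    (hP : P.PosSemidef) (hPI : ((1 : Matrix A A ℂ) - P).PosSemidef)
    (hQ : Q.PosSemidef) (hQI : ((1 : Matrix B B ℂ) - Q).PosSemidef) :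
    ((((1 : Matrix A A ℂ) - P) ⊗ₖ (1 : Matrix B B ℂ) +
        (1 : Matrix A A ℂ) ⊗ₖ ((1 : Matrix B B ℂ) - Q)) -
      ((1 : Matrix (A × B) (A × B) ℂ) - P ⊗ₖ Q)).PosSemidef :=
  operator_union_bound_general P Q hPI hQI
end

section
/- Tensor-product error decomposition: Let P, ρ be complex square matrices over a finite index type A and Q, σ complex square matrices over a finite index type B, with 0 ≤ P ≤ I^A, 0 ≤ Q ≤ I^B, and ρ, σ positive semidefinite. Then Tr[(I^{AB} − P ⊗ Q)(ρ ⊗ σ)] ≤ Tr[(I^A − P)ρ] · Tr[σ] + Tr[ρ] · Tr[(I^B − Q)σ], where ⊗ is the Kronecker product and I^{AB} = I^A ⊗ I^B. -/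
open scoped Matrix ComplexOrder Kronecker

/-! Writing `I - P ⊗ Q = (I - P) ⊗ I + P ⊗ (I - Q)` and taking the trace against `ρ ⊗ σ` gives
`Tr[(I - P)ρ] Tr σ + Tr[Pρ] Tr[(I - Q)σ]`. Since `Tr ρ = Tr[(I - P)ρ] + Tr[Pρ]`, the right-hand side
exceeds this by `Tr[(I - P)ρ] Tr[(I - Q)σ]`, a product of traces of products of two positive
semidefinite matrices, hence nonnegative. -/

namespace Complex

theorem re_mul_of_nonneg_left {z : ℂ} (hz : 0 ≤ z) (w : ℂ) : (z * w).re = z.re * w.re := by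
  simp [mul_re, ← (nonneg_iff.mp hz).2]

theorem re_mul_of_nonneg_right (w : ℂ) {z : ℂ} (hz : 0 ≤ z) : (w * z).re = w.re * z.re := by
  rw [mul_comm, re_mul_of_nonneg_left hz, mul_comm]

end Complex

namespace Matrix

open scoped MatrixOrder in
theorem PosSemidef.trace_mul_nonneg_s6 {𝕜 n : Type*} [RCLike 𝕜] [Fintype n] [DecidableEq n]
    {X Y : Matrix n n 𝕜} (hX : X.PosSemidef) (hY : Y.PosSemidef) : 0 ≤ (X * Y).trace := by
  set S := CFC.sqrt Y
  have hS : S.IsHermitian := (nonneg_iff_posSemidef.mp (CFC.sqrt_nonneg Y)).isHermitian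
  have h_cycle : (X * Y).trace = (S * X * Sᴴ).trace := by
    rw [hS.eq, ← CFC.sqrt_mul_sqrt_self Y hY.nonneg, ← mul_assoc, trace_mul_cycle]
  exact h_cycle ▸ (hX.mul_mul_conjTranspose_same S).trace_nonneg

variable {R m n : Type*}

theorem one_sub_kronecker [Ring R] [DecidableEq m] [DecidableEq n]
    (P : Matrix m m R) (Q : Matrix n n R) :
    1 - P ⊗ₖ Q = (1 - P) ⊗ₖ (1 : Matrix n n R) + P ⊗ₖ (1 - Q) := by
  rw [sub_eq_iff_eq_add, add_assoc, ← kronecker_add, sub_add_cancel, ← add_kronecker,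
    sub_add_cancel, one_kronecker_one]

theorem trace_one_sub_kronecker_mul_kronecker [CommRing R] [Fintype m] [Fintype n]
    [DecidableEq m] [DecidableEq n] (P ρ : Matrix m m R) (Q σ : Matrix n n R) :
    ((1 - P ⊗ₖ Q) * (ρ ⊗ₖ σ)).trace =
      ((1 - P) * ρ).trace * σ.trace + (P * ρ).trace * ((1 - Q) * σ).trace := by
  rw [one_sub_kronecker, add_mul, ← mul_kronecker_mul, ← mul_kronecker_mul, one_mul, trace_add,
    trace_kronecker, trace_kronecker]

end Matrix

open Matrix in
theorem tensor_error_decomposition_general {A B : Type*} [Fintype A] [DecidableEq A]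
    [Fintype B] [DecidableEq B]
    (P ρ : Matrix A A ℂ) (Q σ : Matrix B B ℂ)
    (hPI : ((1 : Matrix A A ℂ) - P).PosSemidef)
    (hQI : ((1 : Matrix B B ℂ) - Q).PosSemidef)
    (hρ : ρ.PosSemidef) (hσ : σ.PosSemidef) :
    ((((1 : Matrix (A × B) (A × B) ℂ) - P ⊗ₖ Q) * (ρ ⊗ₖ σ)).trace).re ≤
      ((((1 : Matrix A A ℂ) - P) * ρ).trace).re * (σ.trace).re +
        (ρ.trace).re * ((((1 : Matrix B B ℂ) - Q) * σ).trace).re := by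
  have hPρ := hPI.trace_mul_nonneg_s6 hρ
  have hQσ := hQI.trace_mul_nonneg_s6 hσ
  have hρ_split : ρ.trace = ((1 - P) * ρ).trace + (P * ρ).trace := by
    rw [← trace_add, ← add_mul, sub_add_cancel, one_mul]
  rw [trace_one_sub_kronecker_mul_kronecker, hρ_split, Complex.add_re, Complex.add_re,
    Complex.re_mul_of_nonneg_left hPρ, Complex.re_mul_of_nonneg_right _ hQσ, add_mul]
  have h_gap : 0 ≤ ((1 - P) * ρ).trace.re * ((1 - Q) * σ).trace.re :=
    mul_nonneg (Complex.nonneg_iff.mp hPρ).1 (Complex.nonneg_iff.mp hQσ).1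
  linarith

/-- Tensor-product error decomposition: for `0 ≤ P ≤ I^A`, `0 ≤ Q ≤ I^B` and positive
semidefinite `ρ`, `σ`,
`Tr[(I^{AB} − P⊗Q)(ρ⊗σ)] ≤ Tr[(I^A − P)ρ]·Tr[σ] + Tr[ρ]·Tr[(I^B − Q)σ]`. -/
theorem tensor_error_decomposition {A B : Type*} [Fintype A] [DecidableEq A]
    [Fintype B] [DecidableEq B]
    (P ρ : Matrix A A ℂ) (Q σ : Matrix B B ℂ)
    (hP : P.PosSemidef) (hPI : ((1 : Matrix A A ℂ) - P).PosSemidef)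
    (hQ : Q.PosSemidef) (hQI : ((1 : Matrix B B ℂ) - Q).PosSemidef)
    (hρ : ρ.PosSemidef) (hσ : σ.PosSemidef) :
    ((((1 : Matrix (A × B) (A × B) ℂ) - P ⊗ₖ Q) * (ρ ⊗ₖ σ)).trace).re ≤
      ((((1 : Matrix A A ℂ) - P) * ρ).trace).re * (σ.trace).re +
        (ρ.trace).re * ((((1 : Matrix B B ℂ) - Q) * σ).trace).re :=
  tensor_error_decomposition_general P ρ Q σ hPI hQI hρ hσ
end

section
/- Ensemble-averaged sandwiched detection bound: Let X be a finite index set, p : X → ℝ a probability distribution, and for each x let ρ_x be a density matrix over a fixed finite index type, with average ρ̄ = Σ_x p(x) ρ_x. Let Π̄ and, for each x, Π_x be matrices with 0 ≤ Π̄ ≤ I and 0 ≤ Π_x ≤ I. If Σ_x p(x) Tr[Π_x ρ_x] ≥ 1 − ε and Tr[Π̄ ρ̄] ≥ 1 − ε for some ε ≥ 0, then Σ_x p(x) Tr[Π̄ Π_x Π̄ ρ_x] ≥ 1 − ε − 2√ε. -/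
open scoped Matrix ComplexOrder

/-!
For a state `ρ`, a detector `A` and `Q = Π̄`, write `A = A(1 - Q) + (1 - Q)AQ + QAQ`.
For the semi-inner product `⟨X, Y⟩ = Tr(Xᴴ Y ρ)` we have `‖A‖, ‖AQ‖ ≤ 1` and
`‖1 - Q‖² = Tr((1 - Q)² ρ) ≤ Tr((1 - Q) ρ) = δ`, so by Cauchy–Schwarz each cross term is at
most `√δ`, i.e. `Tr(QAQρ) ≥ Tr(Aρ) - 2√δ`. Averaging over the ensemble,
concavity of `√` gives `∑ p √δ ≤ √(∑ p δ) ≤ √ε`.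
-/

namespace Matrix

variable {n : Type*} [Fintype n]

open scoped MatrixOrder in
lemma re_trace_mul_nonneg {A ρ : Matrix n n ℂ} (hA : A.PosSemidef) (hρ : ρ.PosSemidef) :
    0 ≤ (A * ρ).trace.re := by
  classical
  obtain ⟨B, rfl⟩ := CStarAlgebra.nonneg_iff_eq_star_mul_self.mp hA.nonneg
  rw [star_eq_conjTranspose, Matrix.mul_assoc, trace_mul_comm]
  exact (RCLike.nonneg_iff.mp (hρ.mul_mul_conjTranspose_same B).trace_nonneg).1

lemma re_trace_mul_le_of_posSemidef_sub {M N ρ : Matrix n n ℂ} (h : (N - M).PosSemidef)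
    (hρ : ρ.PosSemidef) : (M * ρ).trace.re ≤ (N * ρ).trace.re := by
  have := re_trace_mul_nonneg h hρ
  rw [Matrix.sub_mul, trace_sub, Complex.sub_re] at this
  linarith

lemma re_trace_conjTranspose_mul_mul_le_sqrt_mul_sqrt {ρ : Matrix n n ℂ} (hρ : ρ.PosSemidef)
    (X Y : Matrix n n ℂ) :
    (Xᴴ * Y * ρ).trace.re ≤ √(Xᴴ * X * ρ).trace.re * √(Yᴴ * Y * ρ).trace.re := by
  let := ρ.toMatrixSeminormedAddCommGroup hρ
  let := ρ.toMatrixInnerProductSpace hρ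
  have inner_eq (U V : Matrix n n ℂ) : inner ℂ U V = (Uᴴ * V * ρ).trace := by
    rw [Matrix.mul_assoc, trace_mul_comm]; rfl
  have := re_inner_le_norm (𝕜 := ℂ) X Y
  simp only [norm_eq_sqrt_re_inner (𝕜 := ℂ), inner_eq] at this
  exact this

variable [DecidableEq n]

open scoped MatrixOrder in
lemma PosSemidef.sub_mul_self {A : Matrix n n ℂ} (hA : A.PosSemidef) (hA1 : (1 - A).PosSemidef) :
    (A - A * A).PosSemidef := by
  obtain ⟨S, hS, rfl⟩ : ∃ S : Matrix n n ℂ, S.IsHermitian ∧ S * S = A :=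
    ⟨CFC.sqrt A, (nonneg_iff_posSemidef.mp (CFC.sqrt_nonneg A)).isHermitian,
      CFC.sqrt_mul_sqrt_self A hA.nonneg⟩
  have h := hA1.conjTranspose_mul_mul_same S
  rw [hS.eq] at h
  convert h using 1
  noncomm_ring

lemma PosSemidef.one_sub_mul_self {A : Matrix n n ℂ} (hA : A.PosSemidef)
    (hA1 : (1 - A).PosSemidef) : (1 - A * A).PosSemidef := by
  convert (hA.sub_mul_self hA1).add hA1 using 1
  abel

lemma PosSemidef.one_sub_conjTranspose_mul_self_mul {X Y : Matrix n n ℂ}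
    (hX : (1 - Xᴴ * X).PosSemidef) (hY : (1 - Yᴴ * Y).PosSemidef) :
    (1 - (X * Y)ᴴ * (X * Y)).PosSemidef := by
  convert hY.add (hX.conjTranspose_mul_mul_same Y) using 1
  rw [conjTranspose_mul]
  noncomm_ring

lemma re_trace_conjTranspose_mul_self_mul_le_one {X ρ : Matrix n n ℂ}
    (hX : (1 - Xᴴ * X).PosSemidef) (hρ : ρ.PosSemidef) (hρ1 : ρ.trace = 1) :
    (Xᴴ * X * ρ).trace.re ≤ 1 := by
  simpa [hρ1] using re_trace_mul_le_of_posSemidef_sub hX hρ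

theorem re_trace_mul_sub_two_sqrt_le_re_trace_sandwich {A Q ρ : Matrix n n ℂ}
    (hA : A.IsHermitian) (hA1 : (1 - A * A).PosSemidef) (hQ : Q.PosSemidef)
    (hQ1 : (1 - Q).PosSemidef) (hρ : ρ.PosSemidef) (hρ1 : ρ.trace = 1) :
    (A * ρ).trace.re - 2 * √(1 - (Q * ρ).trace.re) ≤ (Q * A * Q * ρ).trace.re := by
  set δ := 1 - (Q * ρ).trace.re
  have hQH : Qᴴ = Q := hQ.isHermitian.eq
  have hQ'H : (1 - Q)ᴴ = 1 - Q := by rw [conjTranspose_sub, conjTranspose_one, hQH]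
  have hAc : (1 - Aᴴ * A).PosSemidef := by rwa [hA.eq]
  have hQc : (1 - Qᴴ * Q).PosSemidef := by rw [hQH]; exact hQ.one_sub_mul_self hQ1
  have hA_le : (Aᴴ * A * ρ).trace.re ≤ 1 :=
    re_trace_conjTranspose_mul_self_mul_le_one hAc hρ hρ1
  have hAQ_le : ((A * Q)ᴴ * (A * Q) * ρ).trace.re ≤ 1 :=
    re_trace_conjTranspose_mul_self_mul_le_one (hAc.one_sub_conjTranspose_mul_self_mul hQc) hρ hρ1
  have hQ'_le : ((1 - Q)ᴴ * (1 - Q) * ρ).trace.re ≤ δ := by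
    rw [hQ'H]
    calc _ ≤ ((1 - Q) * ρ).trace.re :=
          re_trace_mul_le_of_posSemidef_sub (hQ1.sub_mul_self (by simpa using hQ)) hρ
      _ = δ := by
        rw [Matrix.sub_mul, Matrix.one_mul, trace_sub, Complex.sub_re, hρ1, Complex.one_re]
  have hA_off : (Aᴴ * (1 - Q) * ρ).trace.re ≤ √δ := by
    calc _ ≤ √(Aᴴ * A * ρ).trace.re * √((1 - Q)ᴴ * (1 - Q) * ρ).trace.re :=
          re_trace_conjTranspose_mul_mul_le_sqrt_mul_sqrt hρ _ _
      _ ≤ √1 * √δ := by gcongr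
      _ = √δ := by rw [Real.sqrt_one, one_mul]
  have hAQ_off : ((1 - Q)ᴴ * (A * Q) * ρ).trace.re ≤ √δ := by
    calc _ ≤ √((1 - Q)ᴴ * (1 - Q) * ρ).trace.re * √((A * Q)ᴴ * (A * Q) * ρ).trace.re :=
          re_trace_conjTranspose_mul_mul_le_sqrt_mul_sqrt hρ _ _
      _ ≤ √δ * √1 := by gcongr
      _ = √δ := by rw [Real.sqrt_one, mul_one]
  have decomp : A * ρ = Aᴴ * (1 - Q) * ρ + (1 - Q)ᴴ * (A * Q) * ρ + Q * A * Q * ρ := by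
    rw [hA.eq, hQ'H]
    noncomm_ring
  rw [decomp, trace_add, trace_add, Complex.add_re, Complex.add_re]
  linarith

end Matrix

theorem ensemble_sandwiched_detection_general {X d : Type*} [Fintype X] [Fintype d] [DecidableEq d]
    (p : X → ℝ) (hp : ∀ x, 0 ≤ p x) (hp1 : ∑ x, p x = 1)
    (ρ : X → Matrix d d ℂ)
    (hρ : ∀ x, (ρ x).PosSemidef ∧ (ρ x).trace = 1)
    (Pb : Matrix d d ℂ) (hPb : Pb.PosSemidef)
    (hPbI : ((1 : Matrix d d ℂ) - Pb).PosSemidef)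
    (P : X → Matrix d d ℂ)
    (hP : ∀ x, (P x).PosSemidef ∧ ((1 : Matrix d d ℂ) - P x).PosSemidef)
    (ε : ℝ)
    (h1 : 1 - ε ≤ ∑ x, p x * ((P x * ρ x).trace).re)
    (h2 : 1 - ε ≤ ((Pb * ∑ x, (p x : ℂ) • ρ x).trace).re) :
    1 - ε - 2 * Real.sqrt ε ≤ ∑ x, p x * ((Pb * P x * Pb * ρ x).trace).re := by
  set δ : X → ℝ := fun x => 1 - (Pb * ρ x).trace.re
  have hδ_nonneg (x : X) : 0 ≤ δ x := by
    have h := Matrix.re_trace_mul_le_of_posSemidef_sub hPbI (hρ x).1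
    rw [Matrix.one_mul, (hρ x).2, Complex.one_re] at h
    linarith
  have hδ_avg : ∑ x, p x * δ x ≤ ε := by
    have h2' : ((Pb * ∑ x, (p x : ℂ) • ρ x).trace).re = ∑ x, p x * (Pb * ρ x).trace.re := by
      simp [Matrix.mul_sum, Matrix.trace_sum, Complex.re_sum]
    simp only [δ, mul_sub, mul_one, Finset.sum_sub_distrib, hp1]
    linarith
  have hsqrt_avg : ∑ x, p x * √(δ x) ≤ √ε :=
    calc ∑ x, p x * √(δ x) ≤ √(∑ x, p x * δ x) :=
          Real.strictConcaveOn_sqrt.concaveOn.le_map_sum (fun x _ => hp x) hp1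
            (fun x _ => hδ_nonneg x)
      _ ≤ √ε := Real.sqrt_le_sqrt hδ_avg
  have hsandwich (x : X) : p x * (P x * ρ x).trace.re - 2 * (p x * √(δ x)) ≤
      p x * (Pb * P x * Pb * ρ x).trace.re := by
    have h := Matrix.re_trace_mul_sub_two_sqrt_le_re_trace_sandwich (hP x).1.isHermitian
      ((hP x).1.one_sub_mul_self (hP x).2) hPb hPbI (hρ x).1 (hρ x).2
    linarith [mul_le_mul_of_nonneg_left h (hp x)]
  calc 1 - ε - 2 * √ε ≤ ∑ x, p x * (P x * ρ x).trace.re - 2 * ∑ x, p x * √(δ x) := by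
        linarith
    _ = ∑ x, (p x * (P x * ρ x).trace.re - 2 * (p x * √(δ x))) := by
      rw [Finset.mul_sum, ← Finset.sum_sub_distrib]
    _ ≤ _ := Finset.sum_le_sum fun x _ => hsandwich x

/-- Ensemble-averaged sandwiched detection bound: if the detectors `Π_x` succeed on average with
probability at least `1 − ε` and `Π̄` has overlap at least `1 − ε` with the average state, then
the sandwiched detectors `Π̄ Π_x Π̄` succeed on average with probability at least
`1 − ε − 2√ε`. -/
theorem ensemble_sandwiched_detection {X d : Type*} [Fintype X] [Fintype d] [DecidableEq d]
    (p : X → ℝ) (hp : ∀ x, 0 ≤ p x) (hp1 : ∑ x, p x = 1)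
    (ρ : X → Matrix d d ℂ)
    (hρ : ∀ x, (ρ x).PosSemidef ∧ (ρ x).trace = 1)
    (Pb : Matrix d d ℂ) (hPb : Pb.PosSemidef)
    (hPbI : ((1 : Matrix d d ℂ) - Pb).PosSemidef)
    (P : X → Matrix d d ℂ)
    (hP : ∀ x, (P x).PosSemidef ∧ ((1 : Matrix d d ℂ) - P x).PosSemidef)
    (ε : ℝ) (hε : 0 ≤ ε)
    (h1 : 1 - ε ≤ ∑ x, p x * ((P x * ρ x).trace).re)
    (h2 : 1 - ε ≤ ((Pb * ∑ x, (p x : ℂ) • ρ x).trace).re) :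
    1 - ε - 2 * Real.sqrt ε ≤ ∑ x, p x * ((Pb * P x * Pb * ρ x).trace).re :=
  ensemble_sandwiched_detection_general p hp hp1 ρ hρ Pb hPb hPbI P hP ε h1 h2
end

section
/- Double sandwich bound: Let ρ and ρ̄ be positive semidefinite complex square matrices over a fixed finite index type with Tr[ρ] ≤ 1. Let Π' be a positive semidefinite matrix and a ≥ 0 with Π' ≤ a·ρ̄ (positive semidefinite order). Let Π₂ and D be matrices with 0 ≤ Π₂ ≤ I and 0 ≤ D ≤ I, and b ≥ 0 with Π₂ ρ̄ Π₂ ≤ b·Π₂. Then Tr[D Π₂ Π' Π₂ D ρ] ≤ a·b. -/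
/-!
Cycling the trace, `Tr[D Π₂ Π' Π₂ D ρ] = Tr[Π' · Π₂ (D ρ D) Π₂]`. Since `X ↦ Tr[X Y]` is monotone for
`Y ≥ 0`, we may replace `Π'` by `a ρ̄`; cycling again gives `a Tr[Π₂ ρ̄ Π₂ · D ρ D]`, where `Π₂ ρ̄ Π₂`
may be replaced by `b Π₂`; a last cycle gives `a b Tr[D Π₂ D · ρ]`, and `D Π₂ D ≤ D² ≤ I` bounds this
by `a b Tr[ρ] ≤ a b`.
-/

open scoped Matrix ComplexOrder MatrixOrder

section StarOrderedRing

variable {R : Type*} [Ring R] [PartialOrder R] [StarRing R] [StarOrderedRing R]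

theorem mul_self_le_one_of_nonneg_of_le_one {x : R} (h0 : 0 ≤ x) (h1 : x ≤ 1) : x * x ≤ 1 := by
  have hx : IsSelfAdjoint x := .of_nonneg h0
  have h1' : 0 ≤ 1 - x := sub_nonneg.mpr h1
  have key : 1 - x * x = (1 - x) + (1 - x) * x * (1 - x) + x * (1 - x) * x := by noncomm_ring
  rw [← sub_nonneg, key]
  exact add_nonneg (add_nonneg h1' (h1'.isSelfAdjoint.conjugate_nonneg h0))
    (hx.conjugate_nonneg h1')

theorem conjugate_le_one_of_nonneg_of_le_one {x y : R} (h0 : 0 ≤ x) (h1 : x ≤ 1) (hy : y ≤ 1) :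
    x * y * x ≤ 1 :=
  calc x * y * x ≤ x * 1 * x := (IsSelfAdjoint.of_nonneg h0).conjugate_le_conjugate hy
    _ = x * x := by rw [mul_one]
    _ ≤ 1 := mul_self_le_one_of_nonneg_of_le_one h0 h1

end StarOrderedRing

namespace Matrix

variable {n 𝕜 : Type*} [Fintype n] [RCLike 𝕜]

theorem trace_mul_nonneg {A B : Matrix n n 𝕜} (hA : 0 ≤ A) (hB : 0 ≤ B) : 0 ≤ (A * B).trace := by
  classical
  rw [← CFC.sqrt_mul_sqrt_self A hA, Matrix.mul_assoc, trace_mul_comm]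
  exact (nonneg_iff_posSemidef.mp
    ((CFC.sqrt_nonneg A).isSelfAdjoint.conjugate_nonneg hB)).trace_nonneg

theorem trace_mul_le_trace_mul {A B C : Matrix n n 𝕜} (hAB : A ≤ B) (hC : 0 ≤ C) :
    (A * C).trace ≤ (B * C).trace := by
  simpa [sub_mul] using trace_mul_nonneg (sub_nonneg.mpr hAB) hC

theorem trace_mul_le_mul_trace_mul_of_le_smul {A B C : Matrix n n 𝕜} {c : 𝕜} (hAB : A ≤ c • B)
    (hC : 0 ≤ C) : (A * C).trace ≤ c * (B * C).trace := by
  simpa only [smul_mul, trace_smul, smul_eq_mul] using trace_mul_le_trace_mul hAB hC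

theorem trace_double_sandwich_le [DecidableEq n] {ρ ρb P' P₂ D : Matrix n n 𝕜} {a b : 𝕜}
    (hρ : 0 ≤ ρ) (ha : 0 ≤ a) (haP : P' ≤ a • ρb) (hP₂ : P₂ ≤ 1) (hD : 0 ≤ D) (hDI : D ≤ 1)
    (hb : 0 ≤ b) (hbP : P₂ * ρb * P₂ ≤ b • P₂) :
    (D * P₂ * P' * P₂ * D * ρ).trace ≤ a * (b * ρ.trace) := by
  have hP₂sa : IsSelfAdjoint P₂ := (IsSelfAdjoint.iff_of_le hP₂).mpr (.one _)
  have hX : 0 ≤ D * ρ * D := hD.isSelfAdjoint.conjugate_nonneg hρ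
  calc (D * P₂ * P' * P₂ * D * ρ).trace = (P' * (P₂ * (D * ρ * D) * P₂)).trace := by
        rw [show D * P₂ * P' * P₂ * D * ρ = D * P₂ * (P' * (P₂ * D * ρ)) by
          simp only [Matrix.mul_assoc], trace_mul_comm]
        simp only [Matrix.mul_assoc]
    _ ≤ a * (ρb * (P₂ * (D * ρ * D) * P₂)).trace :=
        trace_mul_le_mul_trace_mul_of_le_smul haP (hP₂sa.conjugate_nonneg hX)
    _ = a * (P₂ * ρb * P₂ * (D * ρ * D)).trace := by
        rw [show ρb * (P₂ * (D * ρ * D) * P₂) = ρb * P₂ * (D * ρ * D) * P₂ by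
          simp only [Matrix.mul_assoc], trace_mul_comm]
        simp only [Matrix.mul_assoc]
    _ ≤ a * (b * (P₂ * (D * ρ * D)).trace) := by
        gcongr
        exact trace_mul_le_mul_trace_mul_of_le_smul hbP hX
    _ = a * (b * (D * P₂ * D * ρ).trace) := by
        rw [show P₂ * (D * ρ * D) = P₂ * D * ρ * D by simp only [Matrix.mul_assoc],
          trace_mul_comm]
        simp only [Matrix.mul_assoc]
    _ ≤ a * (b * (1 * ρ).trace) := by
        gcongr
        exact trace_mul_le_trace_mul (conjugate_le_one_of_nonneg_of_le_one hD hDI hP₂) hρ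
    _ = a * (b * ρ.trace) := by rw [Matrix.one_mul]

end Matrix

theorem double_sandwich_general {d : Type*} [Fintype d] [DecidableEq d]
    (ρ ρb : Matrix d d ℂ) (hρ : ρ.PosSemidef)
    (hρtr : (ρ.trace).re ≤ 1)
    (P' : Matrix d d ℂ)
    (a : ℝ) (ha : 0 ≤ a) (haP : ((a : ℂ) • ρb - P').PosSemidef)
    (P₂ D : Matrix d d ℂ)
    (hP₂I : ((1 : Matrix d d ℂ) - P₂).PosSemidef)
    (hD : D.PosSemidef) (hDI : ((1 : Matrix d d ℂ) - D).PosSemidef)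
    (b : ℝ) (hb : 0 ≤ b) (hbP : ((b : ℂ) • P₂ - P₂ * ρb * P₂).PosSemidef) :
    ((D * P₂ * P' * P₂ * D * ρ).trace).re ≤ a * b := by
  have key : (D * P₂ * P' * P₂ * D * ρ).trace ≤ a * (b * ρ.trace) :=
    Matrix.trace_double_sandwich_le hρ.nonneg (Complex.zero_le_real.mpr ha) haP hP₂I hD.nonneg hDI
      (Complex.zero_le_real.mpr hb) hbP
  calc ((D * P₂ * P' * P₂ * D * ρ).trace).re ≤ a * (b * ρ.trace.re) := by
        simpa only [Complex.re_ofReal_mul] using Complex.re_le_re key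
    _ ≤ a * b := by gcongr; exact mul_le_of_le_one_right hb hρtr

/-- Double sandwich bound: if `Π' ≤ a·ρ̄`, `Π₂ ρ̄ Π₂ ≤ b·Π₂`, `0 ≤ Π₂, D ≤ I`, `Π' ≥ 0`,
`ρ, ρ̄ ≥ 0` and `Tr[ρ] ≤ 1`, then `Tr[D Π₂ Π' Π₂ D ρ] ≤ a·b`. -/
theorem double_sandwich {d : Type*} [Fintype d] [DecidableEq d]
    (ρ ρb : Matrix d d ℂ) (hρ : ρ.PosSemidef) (hρb : ρb.PosSemidef)
    (hρtr : (ρ.trace).re ≤ 1)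
    (P' : Matrix d d ℂ) (hP' : P'.PosSemidef)
    (a : ℝ) (ha : 0 ≤ a) (haP : ((a : ℂ) • ρb - P').PosSemidef)
    (P₂ D : Matrix d d ℂ)
    (hP₂ : P₂.PosSemidef) (hP₂I : ((1 : Matrix d d ℂ) - P₂).PosSemidef)
    (hD : D.PosSemidef) (hDI : ((1 : Matrix d d ℂ) - D).PosSemidef)
    (b : ℝ) (hb : 0 ≤ b) (hbP : ((b : ℂ) • P₂ - P₂ * ρb * P₂).PosSemidef) :
    ((D * P₂ * P' * P₂ * D * ρ).trace).re ≤ a * b :=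
  double_sandwich_general ρ ρb hρ hρtr P' a ha haP P₂ D hP₂I hD hDI b hb hbP
end
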